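/- Let k, m ∈ ℕ with m ≥ 1, let J_m be the (m−1)-fold zero-mean primitive of the sawtooth J₁, and let p be a trigonometric polynomial of degree ≤ k with the same parity as m (odd polynomial if m odd, even if m even). Then J_m − p has at most 2k + 2 zeros on S¹, and if it has exactly 2k + 2 zeros then all of them are simple. -/

import Mathlib

open Real MeasureTheory intervalIntegral

/-- The 2π-periodic sawtooth: `J₁(x) = x` for `x ∈ (−π, π)` and `J₁(π) = 0`. -/
noncomputable def J1fun (x : ℝ) : ℝ :=
  if x - 2 * π * round (x / (2 * π)) = -π then 0 else x - 2 * π * round (x / (2 * π))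

/-- An odd real trigonometric polynomial of degree at most `n`. -/
def IsOddTrigPoly (n : ℕ) (p : ℝ → ℝ) : Prop :=
  ∃ b : ℕ → ℝ, ∀ x : ℝ, p x = ∑ j ∈ Finset.range (n + 1), b j * Real.sin (j * x)

/-- An even real trigonometric polynomial of degree at most `n`. -/
def IsEvenTrigPoly (n : ℕ) (p : ℝ → ℝ) : Prop :=
  ∃ a : ℕ → ℝ, ∀ x : ℝ, p x = ∑ j ∈ Finset.range (n + 1), a j * Real.cos (j * x)

/-!
On `(-π, π)` the function `J₁ - p` is `x - p x`. Its derivative `1 - p'` is a trigonometric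
polynomial of degree `≤ k` that is not identically zero (`x - p x` is not periodic), hence has at
most `2k` zeros on the circle, since `e^{ikx} (1 - p' x)` is a polynomial of degree `≤ 2k` in
`e^{ix}`. Rolle's theorem bounds the zeros of `J₁ - p` and then of `J₂ - p`, whose derivative is
`J₁ - p'`; a zero of `J₂ - p` at the jump `π` of `J₁` forces one zero fewer. For `m ≥ 3`,
`J_m - p` is a periodic `C¹` function, so Rolle's theorem around the circle produces, between
consecutive zeros of `J_m - p`, as many zeros of `J_{m-1} - p'` as `J_m - p` has; a double zero
of `J_m - p` would be one more, beyond the bound `2k + 2` for `J_{m-1} - p'`.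
-/

open Set Function

theorem Set.finite_and_ncard_le_of_forall_finset_card_le {α : Type*} {s : Set α} {n : ℕ}
    (h : ∀ F : Finset α, ↑F ⊆ s → F.card ≤ n) : s.Finite ∧ s.ncard ≤ n := by
  have hfin : s.Finite := by
    by_contra hinf
    obtain ⟨F, hFs, hFc⟩ := Set.Infinite.exists_subset_card_eq hinf (n + 1)
    have := h F hFs
    omega
  exact ⟨hfin, Set.ncard_eq_toFinset_card s hfin ▸ h _ (by simp)⟩

theorem exists_finset_deriv_eq_zero {f : ℝ → ℝ} {a b : ℝ} (hf : ContinuousOn f (Icc a b))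
    (F : Finset ℝ) (hF : ↑F ⊆ Icc a b) (hz : ∀ x ∈ F, f x = 0) :
    ∃ G : Finset ℝ, ↑G ⊆ Ioo a b ∧ Disjoint F G ∧ (∀ y ∈ G, deriv f y = 0) ∧
      F.card ≤ G.card + 1 := by
  classical
  induction F using Finset.induction_on_max generalizing b with
  | empty => exact ⟨∅, by simp⟩
  | insert m s hlt ih =>
    have hmem : m ∈ Icc a b := hF (Finset.mem_insert_self m s)
    rcases s.eq_empty_or_nonempty with rfl | hs
    · exact ⟨∅, by simp⟩
    set c := s.max' hs
    have hcm : c < m := hlt c (s.max'_mem hs)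
    have hsc : ↑s ⊆ Icc a c := fun x hx =>
      ⟨(hF (Finset.mem_insert_of_mem hx)).1, s.le_max' x hx⟩
    have hac : a ≤ c := (hsc (s.max'_mem hs)).1
    obtain ⟨G, hG, hdisj, hGz, hcard⟩ :=
      ih (hf.mono (Icc_subset_Icc_right (hcm.le.trans hmem.2))) hsc
        fun x hx => hz x (Finset.mem_insert_of_mem hx)
    obtain ⟨w, hw, hwz⟩ := exists_deriv_eq_zero hcm
      (hf.mono (Icc_subset_Icc hac hmem.2))
      ((hz c (Finset.mem_insert_of_mem (s.max'_mem hs))).trans (hz m (s.mem_insert_self m)).symm)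
    have hwG : w ∉ G := fun h => (hG h).2.not_gt hw.1
    refine ⟨insert w G, ?_, ?_, ?_, ?_⟩
    · rw [Finset.coe_insert]
      exact insert_subset ⟨hac.trans_lt hw.1, hw.2.trans_le hmem.2⟩
        (hG.trans (Ioo_subset_Ioo_right (hcm.le.trans hmem.2)))
    · rw [Finset.disjoint_insert_left, Finset.disjoint_insert_right, Finset.mem_insert]
      refine ⟨?_, fun hws => ?_, hdisj⟩
      · rintro (h | h)
        · exact hw.2.ne h.symm
        · exact (hG h).2.not_gt hcm
      · exact (s.le_max' w hws).not_gt hw.1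
    · simpa [hwz] using hGz
    · rw [Finset.card_insert_of_notMem fun h => (hlt m h).false,
        Finset.card_insert_of_notMem hwG]
      omega

theorem card_le_of_deriv_zeros_le {f : ℝ → ℝ} {a b : ℝ} {M : ℕ} (hf : ContinuousOn f (Icc a b))
    (hM : ∀ G : Finset ℝ, ↑G ⊆ Ioo a b → (∀ y ∈ G, deriv f y = 0) → G.card ≤ M)
    (F : Finset ℝ) (hF : ↑F ⊆ Icc a b) (hz : ∀ x ∈ F, f x = 0) :
    F.card ≤ M + 1 ∧ ∀ x ∈ F, x ∈ Ioo a b → deriv f x = 0 → F.card ≤ M := by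
  classical
  obtain ⟨G, hG, hdisj, hGz, hcard⟩ := exists_finset_deriv_eq_zero hf F hF hz
  refine ⟨hcard.trans (by gcongr; exact hM G hG hGz), fun x hxF hx hx0 => ?_⟩
  have hxG : x ∉ G := Finset.disjoint_left.1 hdisj hxF
  have := hM (insert x G) (by simpa [insert_subset_iff] using ⟨hx, hG⟩)
    (by simpa [hx0] using hGz)
  rw [Finset.card_insert_of_notMem hxG] at this
  omega

theorem Function.Periodic.deriv {f : ℝ → ℝ} {T : ℝ} (hf : Periodic f T) : Periodic (deriv f) T :=
  fun x => by rw [← deriv_comp_add_const, show (fun y => f (y + T)) = f from funext hf]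

theorem toIocMod_injOn_Ico {T : ℝ} (hT : 0 < T) (c a : ℝ) :
    InjOn (toIocMod hT c) (Ico a (a + T)) := by
  intro x hx y hy hxy
  obtain ⟨n, hn⟩ := (toIocMod_eq_toIocMod hT).1 hxy
  rw [← toIcoMod_eq_self hT] at hx hy
  rw [← hx, ← hy, show y = x + n • T by rw [← hn]; ring, toIcoMod_add_zsmul]

theorem exists_finset_deriv_eq_zero_of_periodic {f : ℝ → ℝ} {T : ℝ} (hf : Periodic f T)
    (hT : 0 < T) (hc : Continuous f) {c : ℝ} (F : Finset ℝ) (hF : ↑F ⊆ Ioc c (c + T))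
    (hz : ∀ x ∈ F, f x = 0) :
    ∃ G : Finset ℝ, ↑G ⊆ Ioc c (c + T) ∧ Disjoint F G ∧ (∀ y ∈ G, deriv f y = 0) ∧
      F.card ≤ G.card := by
  classical
  rcases F.eq_empty_or_nonempty with rfl | hne
  · exact ⟨∅, by simp⟩
  set a := F.min' hne
  have ha : a ∈ Ioc c (c + T) := hF (F.min'_mem hne)
  have hFa : ↑F ⊆ Ico a (a + T) := fun x hx => ⟨F.min'_le x hx, by linarith [(hF hx).2, ha.1]⟩
  have hend : a + T ∉ F := fun h => (hFa h).2.false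
  obtain ⟨G, hG, hdisj, hGz, hcard⟩ := exists_finset_deriv_eq_zero hc.continuousOn
    (insert (a + T) F)
    (by
      rw [Finset.coe_insert, insert_subset_iff]
      exact ⟨⟨by linarith, le_rfl⟩, hFa.trans Ico_subset_Icc_self⟩)
    (by simpa [hf a] using ⟨hz a (F.min'_mem hne), hz⟩)
  have hinj : InjOn (toIocMod hT c) (Ico a (a + T)) := toIocMod_injOn_Ico hT c a
  have hGa : ↑G ⊆ Ico a (a + T) := hG.trans Ioo_subset_Ico_self
  refine ⟨G.image (toIocMod hT c), ?_, ?_, ?_, ?_⟩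
  · rw [Finset.coe_image]
    exact image_subset_iff.2 fun y _ => toIocMod_mem_Ioc hT c y
  · rw [Finset.disjoint_right]
    simp only [Finset.mem_image]
    rintro _ ⟨y, hy, rfl⟩ hyF
    have hyx : y = toIocMod hT c y :=
      hinj (hGa hy) (hFa hyF) ((toIocMod_eq_self hT).2 (hF hyF)).symm
    exact Finset.disjoint_left.1 hdisj (Finset.mem_insert_of_mem hyF) (hyx ▸ hy)
  · simp only [Finset.mem_image]
    rintro _ ⟨y, hy, rfl⟩
    rw [← self_sub_toIocDiv_zsmul, hf.deriv.sub_zsmul_eq]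
    exact hGz y hy
  · rw [Finset.card_image_of_injOn (hinj.mono hGa)]
    rw [Finset.card_insert_of_notMem hend] at hcard
    omega

theorem card_le_of_deriv_zeros_le_of_periodic {f : ℝ → ℝ} {T : ℝ} (hf : Periodic f T)
    (hT : 0 < T) (hc : Continuous f) {c : ℝ} {M : ℕ}
    (hM : ∀ G : Finset ℝ, ↑G ⊆ Ioc c (c + T) → (∀ y ∈ G, deriv f y = 0) → G.card ≤ M)
    (F : Finset ℝ) (hF : ↑F ⊆ Ioc c (c + T)) (hz : ∀ x ∈ F, f x = 0) :
    F.card ≤ M ∧ ∀ x ∈ F, deriv f x = 0 → F.card < M := by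
  classical
  obtain ⟨G, hG, hdisj, hGz, hcard⟩ := exists_finset_deriv_eq_zero_of_periodic hf hT hc F hF hz
  refine ⟨hcard.trans (hM G hG hGz), fun x hxF hx0 => ?_⟩
  have hxG : x ∉ G := Finset.disjoint_left.1 hdisj hxF
  have := hM (insert x G) (by simpa [insert_subset_iff] using ⟨hF hxF, hG⟩)
    (by simpa [hx0] using hGz)
  rw [Finset.card_insert_of_notMem hxG] at this
  omega

def TrigPoly (k : ℕ) (f : ℝ → ℝ) : Prop :=
  ∃ a b : ℕ → ℝ, ∀ x, f x = ∑ j ∈ Finset.range (k + 1), (a j * cos (j * x) + b j * sin (j * x))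

theorem IsOddTrigPoly.trigPoly {k : ℕ} {f : ℝ → ℝ} (hf : IsOddTrigPoly k f) : TrigPoly k f := by
  obtain ⟨b, hb⟩ := hf
  exact ⟨0, b, by simpa using hb⟩

theorem IsEvenTrigPoly.trigPoly {k : ℕ} {f : ℝ → ℝ} (hf : IsEvenTrigPoly k f) : TrigPoly k f := by
  obtain ⟨a, ha⟩ := hf
  exact ⟨a, 0, by simpa using ha⟩

section ExpPolynomial

open Polynomial

/-- `z ^ k * ∑ (a j * cos (j * x) + b j * sin (j * x))` written as a polynomial in
`z = exp (x * I)`. -/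
noncomputable def trigExpPolynomial (k : ℕ) (a b : ℕ → ℝ) : ℂ[X] :=
  ∑ j ∈ Finset.range (k + 1),
    (C ((a j - b j * Complex.I) / 2) * X ^ (k + j) + C ((a j + b j * Complex.I) / 2) * X ^ (k - j))

theorem natDegree_trigExpPolynomial_le (k : ℕ) (a b : ℕ → ℝ) :
    (trigExpPolynomial k a b).natDegree ≤ 2 * k := by
  refine natDegree_sum_le_of_forall_le _ _ fun j hj => (natDegree_add_le _ _).trans (max_le ?_ ?_)
  all_goals
    refine (natDegree_C_mul_le _ _).trans ?_
    rw [natDegree_X_pow]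
    have := Finset.mem_range.1 hj
    omega

theorem eval_trigExpPolynomial (k : ℕ) (a b : ℕ → ℝ) (x : ℝ) :
    (trigExpPolynomial k a b).eval (Complex.exp (x * Complex.I)) =
      Complex.exp (k * x * Complex.I) *
        ↑(∑ j ∈ Finset.range (k + 1), (a j * cos (j * x) + b j * sin (j * x))) := by
  rw [trigExpPolynomial, eval_finsetSum, Complex.ofReal_sum, Finset.mul_sum]
  refine Finset.sum_congr rfl fun j hj => ?_
  have hjk : j ≤ k := Nat.lt_succ_iff.1 (Finset.mem_range.1 hj)
  have hpow : ∀ n : ℕ, Complex.exp (x * Complex.I) ^ n = Complex.exp (n * x * Complex.I) := by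
    intro n
    rw [← Complex.exp_nat_mul]
    ring_nf
  have hplus : Complex.exp ((k + j : ℕ) * x * Complex.I) = Complex.exp (k * x * Complex.I) *
      (Complex.cos (j * x) + Complex.sin (j * x) * Complex.I) := by
    rw [Nat.cast_add, ← Complex.exp_mul_I, ← Complex.exp_add]
    ring_nf
  have hminus : Complex.exp ((k - j : ℕ) * x * Complex.I) = Complex.exp (k * x * Complex.I) *
      (Complex.cos (j * x) - Complex.sin (j * x) * Complex.I) := by
    rw [Nat.cast_sub hjk, sub_mul, sub_mul, sub_eq_add_neg, ← neg_mul, Complex.exp_add,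
      Complex.exp_mul_I (-(j * x)), Complex.cos_neg, Complex.sin_neg]
    ring
  simp only [eval_add, eval_mul, eval_C, eval_pow, eval_X, hpow, hplus, hminus]
  push_cast
  linear_combination (-(Complex.exp (k * x * Complex.I) * b j * Complex.sin (j * x))) *
    Complex.I_sq

end ExpPolynomial

namespace TrigPoly

variable {k : ℕ} {f q : ℝ → ℝ}

theorem periodic (hf : TrigPoly k f) : Periodic f (2 * π) := by
  obtain ⟨a, b, hab⟩ := hf
  intro x
  simp only [hab, mul_add]
  refine Finset.sum_congr rfl fun j _ => ?_
  rw [show (j : ℝ) * (2 * π) = (j : ℕ) * (2 * π) from rfl, cos_add_nat_mul_two_pi,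
    sin_add_nat_mul_two_pi]

theorem const_sub (hf : TrigPoly k f) (c : ℝ) : TrigPoly k (fun x => c - f x) := by
  obtain ⟨a, b, hab⟩ := hf
  refine ⟨Pi.single 0 c - a, -b, fun x => ?_⟩
  simp [hab, sub_mul, Finset.sum_add_distrib, Finset.sum_sub_distrib, Pi.single_apply]
  ring

theorem exists_hasDerivAt (hf : TrigPoly k f) :
    ∃ f' : ℝ → ℝ, TrigPoly k f' ∧ ∀ x, HasDerivAt f (f' x) x := by
  obtain ⟨a, b, hab⟩ := hf
  refine ⟨_, ⟨fun j => j * b j, fun j => -(j * a j), fun x => rfl⟩, fun x => ?_⟩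
  rw [show f = fun x => ∑ j ∈ Finset.range (k + 1), (a j * cos (j * x) + b j * sin (j * x))
    from funext hab]
  refine HasDerivAt.fun_sum fun j _ => ?_
  have hlin : HasDerivAt (fun y : ℝ => (j : ℝ) * y) j x := by
    simpa using (hasDerivAt_id x).const_mul (j : ℝ)
  convert (hlin.cos.const_mul (a j)).fun_add (hlin.sin.const_mul (b j)) using 1
  ring

theorem differentiable (hf : TrigPoly k f) : Differentiable ℝ f := by
  obtain ⟨f', -, hf'⟩ := hf.exists_hasDerivAt
  exact fun x => (hf' x).differentiableAt

theorem trigPoly_deriv (hf : TrigPoly k f) : TrigPoly k (deriv f) := by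
  obtain ⟨f', hf', hd⟩ := hf.exists_hasDerivAt
  rwa [show deriv f = f' from funext fun x => (hd x).deriv]

theorem eq_zero_of_two_mul_lt_card (hf : TrigPoly k f) (F : Finset ℝ) (hF : ↑F ⊆ Ioc (-π) π)
    (hz : ∀ x ∈ F, f x = 0) (hcard : 2 * k < F.card) : f = 0 := by
  obtain ⟨a, b, hab⟩ := hf
  have hinj : InjOn (fun x : ℝ => Complex.exp (x * Complex.I)) (Ioc (-π) π) := by
    intro x hx y hy hxy
    exact Circle.exp_injOn_Ioc (by linarith) hx hy (Subtype.ext (by simpa using hxy))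
  have hP : trigExpPolynomial k a b = 0 := by
    refine Polynomial.eq_zero_of_natDegree_lt_card_of_eval_eq_zero' _
      (F.image fun x : ℝ => Complex.exp (x * Complex.I)) (fun z hz' => ?_) ?_
    · obtain ⟨x, hx, rfl⟩ := Finset.mem_image.1 hz'
      rw [eval_trigExpPolynomial, ← hab, hz x hx, Complex.ofReal_zero, mul_zero]
    · rw [Finset.card_image_of_injOn (hinj.mono hF)]
      exact (natDegree_trigExpPolynomial_le k a b).trans_lt hcard
  funext x
  have := eval_trigExpPolynomial k a b x
  rw [hP, Polynomial.eval_zero, ← hab, zero_eq_mul] at this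
  exact_mod_cast this.resolve_left (Complex.exp_ne_zero _)

theorem card_deriv_eq_one_le (hq : TrigPoly k q) (G : Finset ℝ) (hG : ↑G ⊆ Ioc (-π) π)
    (h1 : ∀ y ∈ G, deriv q y = 1) : G.card ≤ 2 * k := by
  by_contra! hlt
  have h0 := (hq.trigPoly_deriv.const_sub 1).eq_zero_of_two_mul_lt_card G hG
    (fun y hy => by simp [h1 y hy]) hlt
  have hq' : ∀ x, deriv q x = 1 := fun x => (sub_eq_zero.1 (congrFun h0 x)).symm
  -- `q x - x` would be constant, contradicting the periodicity of `q`
  have hconst := is_const_of_deriv_eq_zero (f := fun x => q x - x)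
    (hq.differentiable.sub differentiable_id) (fun x => by
      rw [deriv_fun_sub (hq.differentiable x) differentiableAt_fun_id, hq' x, deriv_id'', sub_self])
    (0 + 2 * π) 0
  rw [hq.periodic] at hconst
  linarith [pi_pos]

theorem card_fixedPoints_le (hq : TrigPoly k q) (F : Finset ℝ) (hF : ↑F ⊆ Icc (-π) π)
    (hfix : ∀ x ∈ F, q x = x) :
    F.card ≤ 2 * k + 1 ∧ ∀ x ∈ F, x ∈ Ioo (-π) π → deriv q x = 1 → F.card ≤ 2 * k := by
  have hd : ∀ x, deriv (fun y => y - q y) x = 1 - deriv q x := fun x => by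
    rw [deriv_fun_sub differentiableAt_fun_id (hq.differentiable x), deriv_id'']
  obtain ⟨hcard, hsimple⟩ := card_le_of_deriv_zeros_le (f := fun y => y - q y)
    (continuous_id.sub hq.differentiable.continuous).continuousOn
    (fun G hG hGz => hq.card_deriv_eq_one_le G (hG.trans Ioo_subset_Ioc_self)
      fun y hy => by linarith [hd y, hGz y hy])
    F hF (fun x hx => by simp [hfix x hx])
  exact ⟨hcard, fun x hxF hx h1 => hsimple x hxF hx (by rw [hd, h1, sub_self])⟩

end TrigPoly

section Sawtooth

variable {x : ℝ}

theorem J1fun_eq_self (hx : x ∈ Ioo (-π) π) : J1fun x = x := by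
  have hr : round (x / (2 * π)) = 0 := by
    rw [round_eq_zero_iff]
    constructor
    · rw [le_div_iff₀ (by positivity)]; linarith [hx.1]
    · rw [div_lt_iff₀ (by positivity)]; linarith [hx.2]
  simp [J1fun, hr, hx.1.ne']

theorem J1fun_pi : J1fun π = 0 := by
  have hr : round (π / (2 * π)) = 1 := by
    rw [show π / (2 * π) = 1 / 2 by field_simp, round_eq]
    norm_num
  simp only [J1fun, hr, Int.cast_one, mul_one]
  rw [if_pos (by ring)]

theorem J1fun_periodic : Periodic J1fun (2 * π) := by
  intro x
  have hr : round ((x + 2 * π) / (2 * π)) = round (x / (2 * π)) + 1 := by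
    rw [show (x + 2 * π) / (2 * π) = x / (2 * π) + 1 by field_simp, round_add_one]
  simp only [J1fun, hr, Int.cast_add, Int.cast_one, mul_add, mul_one, add_sub_add_right_eq_sub]

theorem J1fun_eventuallyEq_id (hx : x ∈ Ioo (-π) π) : J1fun =ᶠ[nhds x] id :=
  Filter.eventuallyEq_of_mem (isOpen_Ioo.mem_nhds hx) fun _ hy => J1fun_eq_self hy

theorem continuousOn_J1fun : ContinuousOn J1fun (Ioo (-π) π) :=
  continuousOn_id.congr fun _ hy => J1fun_eq_self hy

theorem J1fun_intervalIntegrable (a b : ℝ) : IntervalIntegrable J1fun volume a b := by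
  refine J1fun_periodic.intervalIntegrable (t := -π) (by positivity) ?_ a b
  rw [show -π + 2 * π = π by ring, intervalIntegrable_congr_uIoo (g := id)
    (by rw [uIoo_of_le (by linarith [pi_pos])]; exact fun _ hy => J1fun_eq_self hy)]
  exact intervalIntegrable_id

theorem integral_J1fun : ∫ x in (0 : ℝ)..2 * π, J1fun x = 0 := by
  rw [← zero_add (2 * π), J1fun_periodic.intervalIntegral_add_eq 0 (-π),
    show -π + 2 * π = π by ring,
    integral_congr_Ioo_of_le (g := fun x => x) (by linarith [pi_pos])
      fun _ hy => J1fun_eq_self hy, integral_id]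
  ring

theorem card_zeros_J1fun_sub_le {k : ℕ} {q : ℝ → ℝ} (hq : TrigPoly k q) (F : Finset ℝ)
    (hF : ↑F ⊆ Ioc (-π) π) (hz : ∀ x ∈ F, J1fun x = q x) :
    F.card ≤ 2 * k + 2 ∧
      (F.card = 2 * k + 2 → ∀ x ∈ F, x ≠ π → deriv (fun y => J1fun y - q y) x ≠ 0) := by
  classical
  have hIoo : ∀ x ∈ F.erase π, x ∈ Ioo (-π) π := fun x hx =>
    ⟨(hF (Finset.mem_of_mem_erase hx)).1,
      (hF (Finset.mem_of_mem_erase hx)).2.lt_of_ne (Finset.ne_of_mem_erase hx)⟩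
  obtain ⟨hcard, hsimple⟩ := hq.card_fixedPoints_le (F.erase π)
    (fun x hx => Ioo_subset_Icc_self (hIoo x hx))
    fun x hx => by rw [← hz x (Finset.mem_of_mem_erase hx), J1fun_eq_self (hIoo x hx)]
  have herase := Finset.pred_card_le_card_erase (s := F) (a := π)
  refine ⟨by omega, fun h x hx hxπ h0 => ?_⟩
  have hxe : x ∈ F.erase π := Finset.mem_erase.2 ⟨hxπ, hx⟩
  have hJ1 : HasDerivAt J1fun 1 x :=
    (hasDerivAt_id x).congr_of_eventuallyEq (J1fun_eventuallyEq_id (hIoo x hxe))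
  rw [(hJ1.fun_sub (hq.differentiable x).hasDerivAt).deriv, sub_eq_zero] at h0
  have := hsimple x hxe (hIoo x hxe) h0.symm
  omega

end Sawtooth

structure IsSawtoothPrimitives (J : ℕ → ℝ → ℝ) : Prop where
  one : J 1 = J1fun
  succ : ∀ n, 1 ≤ n → ∀ x : ℝ, J (n + 1) x = J (n + 1) 0 + ∫ t in (0:ℝ)..x, J n t
  mean : ∀ n, 1 ≤ n → (∫ x in (0:ℝ)..(2 * π), J (n + 1) x) = 0

namespace IsSawtoothPrimitives

variable {J : ℕ → ℝ → ℝ} {n k : ℕ} {q : ℝ → ℝ}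

theorem eq_primitive (hJ : IsSawtoothPrimitives J) (hn : 1 ≤ n) :
    J (n + 1) = fun x => J (n + 1) 0 + ∫ t in (0:ℝ)..x, J n t :=
  funext (hJ.succ n hn)

theorem integral_eq_zero (hJ : IsSawtoothPrimitives J) (hn : 1 ≤ n) :
    ∫ x in (0:ℝ)..2 * π, J n x = 0 := by
  obtain rfl | ⟨m, hm, rfl⟩ : n = 1 ∨ ∃ m, 1 ≤ m ∧ n = m + 1 :=
    (eq_or_lt_of_le hn).imp Eq.symm fun h => ⟨n - 1, by omega, by omega⟩
  · rw [hJ.one]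
    exact integral_J1fun
  · exact hJ.mean m hm

theorem intervalIntegrable (hJ : IsSawtoothPrimitives J) (hn : 1 ≤ n) (a b : ℝ) :
    IntervalIntegrable (J n) volume a b := by
  induction n, hn using Nat.le_induction generalizing a b with
  | base =>
    rw [hJ.one]
    exact J1fun_intervalIntegrable a b
  | succ n hn ih =>
    rw [hJ.eq_primitive hn]
    exact (continuous_const.add (continuous_primitive ih 0)).intervalIntegrable a b

theorem continuous (hJ : IsSawtoothPrimitives J) (hn : 2 ≤ n) : Continuous (J n) := by
  obtain ⟨n, rfl⟩ : ∃ m, n = m + 1 := ⟨n - 1, by omega⟩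
  rw [hJ.eq_primitive (by omega)]
  exact continuous_const.add
    (continuous_primitive (hJ.intervalIntegrable (by omega)) 0)

theorem periodic (hJ : IsSawtoothPrimitives J) (hn : 1 ≤ n) : Periodic (J n) (2 * π) := by
  induction n, hn using Nat.le_induction with
  | base =>
    rw [hJ.one]
    exact J1fun_periodic
  | succ n hn ih =>
    intro x
    rw [hJ.succ n hn, hJ.succ n hn x,
      ← integral_add_adjacent_intervals (hJ.intervalIntegrable hn 0 x)
        (hJ.intervalIntegrable hn x _),
      ih.intervalIntegral_add_eq x 0, zero_add, hJ.integral_eq_zero hn, add_zero]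

theorem hasDerivAt_succ (hJ : IsSawtoothPrimitives J) (hn : 1 ≤ n) {s : Set ℝ} (hs : IsOpen s)
    (hc : ContinuousOn (J n) s) {x : ℝ} (hx : x ∈ s) : HasDerivAt (J (n + 1)) (J n x) x := by
  rw [hJ.eq_primitive hn]
  exact (integral_hasDerivAt_right (hJ.intervalIntegrable hn 0 x)
    (ContinuousOn.stronglyMeasurableAtFilter hs hc x hx)
    (hc.continuousAt (hs.mem_nhds hx))).const_add _

theorem card_zeros_two_sub_le (hJ : IsSawtoothPrimitives J) (hq : TrigPoly k q) (F : Finset ℝ)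
    (hF : ↑F ⊆ Ioc (-π) π) (hz : ∀ x ∈ F, J 2 x = q x) :
    F.card ≤ 2 * k + 2 ∧
      (F.card = 2 * k + 2 → π ∉ F ∧ ∀ x ∈ F, deriv (fun y => J 2 y - q y) x ≠ 0) := by
  classical
  have hd : ∀ x ∈ Ioo (-π) π, deriv (fun y => J 2 y - q y) x = x - deriv q x := fun x hx => by
    rw [((hJ.hasDerivAt_succ le_rfl isOpen_Ioo (hJ.one ▸ continuousOn_J1fun) hx).fun_sub
      (hq.differentiable x).hasDerivAt).deriv, hJ.one, J1fun_eq_self hx]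
  have hM : ∀ G : Finset ℝ, ↑G ⊆ Ioo (-π) π → (∀ y ∈ G, deriv (fun y => J 2 y - q y) y = 0) →
      G.card ≤ 2 * k + 1 := fun G hG hGz =>
    (hq.trigPoly_deriv.card_fixedPoints_le G (hG.trans Ioo_subset_Icc_self)
      fun y hy => by linarith [hd y (hG hy), hGz y hy]).1
  have hfc : ContinuousOn (fun y => J 2 y - q y) (Icc (-π) π) :=
    ((hJ.continuous le_rfl).sub hq.differentiable.continuous).continuousOn
  by_cases hπ : π ∈ F
  · have hneg : J 2 (-π) = q (-π) := by
      rw [← hJ.periodic one_le_two, ← hq.periodic, show -π + 2 * π = π by ring, hz π hπ]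
    have hcard := (card_le_of_deriv_zeros_le hfc hM (insert (-π) F)
      (by
        rw [Finset.coe_insert, insert_subset_iff]
        exact ⟨⟨le_rfl, by linarith [pi_pos]⟩, hF.trans Ioc_subset_Icc_self⟩)
      (by simpa [hneg, sub_eq_zero] using hz)).1
    rw [Finset.card_insert_of_notMem fun h => (hF h).1.false] at hcard
    exact ⟨by omega, fun h => by omega⟩
  · have hIoo : ∀ x ∈ F, x ∈ Ioo (-π) π := fun x hx =>
      ⟨(hF hx).1, (hF hx).2.lt_of_ne fun h => hπ (h ▸ hx)⟩
    obtain ⟨hcard, hsimple⟩ := card_le_of_deriv_zeros_le hfc hM F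
      (fun x hx => Ioo_subset_Icc_self (hIoo x hx)) fun x hx => sub_eq_zero.2 (hz x hx)
    exact ⟨hcard, fun h => ⟨hπ, fun x hx h0 => by have := hsimple x hx (hIoo x hx) h0; omega⟩⟩

theorem card_zeros_succ_sub_le (hJ : IsSawtoothPrimitives J) (hn : 2 ≤ n) (hq : TrigPoly k q)
    {M : ℕ} (hM : ∀ G : Finset ℝ, ↑G ⊆ Ioc (-π) π → (∀ y ∈ G, J n y = deriv q y) → G.card ≤ M)
    (F : Finset ℝ) (hF : ↑F ⊆ Ioc (-π) π) (hz : ∀ x ∈ F, J (n + 1) x = q x) :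
    F.card ≤ M ∧ ∀ x ∈ F, deriv (fun y => J (n + 1) y - q y) x = 0 → F.card < M := by
  have hd : ∀ x, deriv (fun y => J (n + 1) y - q y) x = J n x - deriv q x := fun x =>
    ((hJ.hasDerivAt_succ (by omega) isOpen_univ (hJ.continuous hn).continuousOn
      (mem_univ x)).fun_sub (hq.differentiable x).hasDerivAt).deriv
  have hwindow : Ioc (-π) (-π + 2 * π) = Ioc (-π) π := by rw [show -π + 2 * π = π by ring]
  exact card_le_of_deriv_zeros_le_of_periodic (f := fun y => J (n + 1) y - q y)
    ((hJ.periodic (by omega)).sub hq.periodic)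
    (by positivity) ((hJ.continuous (by omega)).sub hq.differentiable.continuous)
    (fun G hG hGz => hM G (hwindow ▸ hG) fun y hy => by linarith [hd y, hGz y hy])
    F (hwindow ▸ hF) fun x hx => sub_eq_zero.2 (hz x hx)

theorem card_zeros_sub_le (hJ : IsSawtoothPrimitives J) (hn : 2 ≤ n) (hq : TrigPoly k q)
    (F : Finset ℝ) (hF : ↑F ⊆ Ioc (-π) π) (hz : ∀ x ∈ F, J n x = q x) : F.card ≤ 2 * k + 2 := by
  induction n, hn using Nat.le_induction generalizing q F with
  | base => exact (hJ.card_zeros_two_sub_le hq F hF hz).1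
  | succ n hn ih =>
    exact (hJ.card_zeros_succ_sub_le hn hq (fun G hG hGz => ih hq.trigPoly_deriv G hG hGz)
      F hF hz).1

theorem deriv_sub_ne_zero (hJ : IsSawtoothPrimitives J) (hn : 3 ≤ n) (hq : TrigPoly k q)
    (F : Finset ℝ) (hF : ↑F ⊆ Ioc (-π) π) (hz : ∀ x ∈ F, J n x = q x)
    (hcard : F.card = 2 * k + 2) : ∀ x ∈ F, deriv (fun y => J n y - q y) x ≠ 0 := by
  obtain ⟨n, rfl⟩ : ∃ m, n = m + 1 := ⟨n - 1, by omega⟩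
  exact fun x hx h0 => ((hJ.card_zeros_succ_sub_le (by omega) hq
    (fun G hG hGz => hJ.card_zeros_sub_le (by omega) hq.trigPoly_deriv G hG hGz)
    F hF hz).2 x hx h0).ne hcard


theorem card_zeros_sub_le_and_simple {m : ℕ} {p : ℝ → ℝ} (hJ : IsSawtoothPrimitives J)
    (hm : 1 ≤ m) (hp : TrigPoly k p) (F : Finset ℝ) (hF : ↑F ⊆ Ioc (-π) π)
    (hz : ∀ x ∈ F, J m x = p x) :
    F.card ≤ 2 * k + 2 ∧
      (F.card = 2 * k + 2 → ∀ x ∈ F,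
        if x = π then
          (if m = 1 then p π = 0
           else if m = 2 then False
           else deriv (fun y => J m y - p y) π ≠ 0)
        else deriv (fun y => J m y - p y) x ≠ 0) := by
  obtain rfl | rfl | hm3 : m = 1 ∨ m = 2 ∨ 3 ≤ m := by omega
  · rw [hJ.one] at hz ⊢
    obtain ⟨hcard, hsimple⟩ := card_zeros_J1fun_sub_le hp F hF hz
    refine ⟨hcard, fun h x hx => ?_⟩
    by_cases hxπ : x = π
    · rw [if_pos hxπ, if_pos rfl, ← hz π (hxπ ▸ hx), J1fun_pi]
    · rw [if_neg hxπ]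
      exact hsimple h x hx hxπ
  · obtain ⟨hcard, hsimple⟩ := hJ.card_zeros_two_sub_le hp F hF hz
    refine ⟨hcard, fun h x hx => ?_⟩
    by_cases hxπ : x = π
    · rw [if_pos hxπ, if_neg (by norm_num), if_pos rfl]
      exact (hsimple h).1 (hxπ ▸ hx)
    · rw [if_neg hxπ]
      exact (hsimple h).2 x hx
  · refine ⟨hJ.card_zeros_sub_le (by omega) hp F hF hz, fun h x hx => ?_⟩
    have hsimple := hJ.deriv_sub_ne_zero hm3 hp F hF hz h
    by_cases hxπ : x = π
    · rw [if_pos hxπ, if_neg (by omega), if_neg (by omega)]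
      exact hsimple π (hxπ ▸ hx)
    · rw [if_neg hxπ]
      exact hsimple x hx

end IsSawtoothPrimitives

theorem Jm_zero_count_and_simplicity_general
    (k m : ℕ) (hm : 1 ≤ m)
    (J : ℕ → ℝ → ℝ)
    (hJ1 : J 1 = J1fun)
    (hJrec : ∀ n, 1 ≤ n → ∀ x : ℝ, J (n + 1) x = J (n + 1) 0 + ∫ t in (0:ℝ)..x, J n t)
    (hJmean : ∀ n, 1 ≤ n → (∫ x in (0:ℝ)..(2 * π), J (n + 1) x) = 0)
    (p : ℝ → ℝ)
    (hparity : (Odd m → IsOddTrigPoly k p) ∧ (Even m → IsEvenTrigPoly k p)) :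
    ({x ∈ Set.Ioc (-π) π | J m x = p x}).Finite ∧
    ({x ∈ Set.Ioc (-π) π | J m x = p x}).ncard ≤ 2 * k + 2 ∧
    (({x ∈ Set.Ioc (-π) π | J m x = p x}).ncard = 2 * k + 2 →
      ∀ x ∈ {x ∈ Set.Ioc (-π) π | J m x = p x},
        if x = π then
          (if m = 1 then p π = 0
           else if m = 2 then False
           else deriv (fun y => J m y - p y) π ≠ 0)
        else deriv (fun y => J m y - p y) x ≠ 0) := by
  have hJ : IsSawtoothPrimitives J := ⟨hJ1, hJrec, hJmean⟩
  have hp : TrigPoly k p :=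
    (Nat.even_or_odd m).elim (fun h => (hparity.2 h).trigPoly) fun h => (hparity.1 h).trigPoly
  have key := fun (F : Finset ℝ) (hF : ↑F ⊆ {x ∈ Set.Ioc (-π) π | J m x = p x}) =>
    hJ.card_zeros_sub_le_and_simple hm hp F (fun x hx => (hF hx).1) fun x hx => (hF hx).2
  obtain ⟨hfin, hcard⟩ := Set.finite_and_ncard_le_of_forall_finset_card_le fun F hF => (key F hF).1
  refine ⟨hfin, hcard, fun h x hx => (key hfin.toFinset (by simp)).2 ?_ x (hfin.mem_toFinset.2 hx)⟩
  rwa [← Set.ncard_eq_toFinset_card _ hfin]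

/-- **Zero-count and simplicity for `J_m − p`.**
Let `J m` be the `(m−1)`-fold zero-mean primitive of the sawtooth `J₁`, and let
`p` be a trigonometric polynomial of degree ≤ k of the same parity as `m`.
Then `J_m − p` has at most `2k + 2` zeros on the circle `(−π, π]`, and if it has
exactly `2k + 2` zeros then all are simple (with the paper's conventions at
`x = π` for `m = 1, 2`). -/
theorem Jm_zero_count_and_simplicity
    (k m : ℕ) (hk : 1 ≤ k) (hm : 1 ≤ m)
    (J : ℕ → ℝ → ℝ)
    (hJ1 : J 1 = J1fun)
    (hJrec : ∀ n, 1 ≤ n → ∀ x : ℝ, J (n + 1) x = J (n + 1) 0 + ∫ t in (0:ℝ)..x, J n t)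
    (hJmean : ∀ n, 1 ≤ n → (∫ x in (0:ℝ)..(2 * π), J (n + 1) x) = 0)
    (p : ℝ → ℝ)
    (hparity : (Odd m → IsOddTrigPoly k p) ∧ (Even m → IsEvenTrigPoly k p)) :
    ({x ∈ Set.Ioc (-π) π | J m x = p x}).Finite ∧
    ({x ∈ Set.Ioc (-π) π | J m x = p x}).ncard ≤ 2 * k + 2 ∧
    (({x ∈ Set.Ioc (-π) π | J m x = p x}).ncard = 2 * k + 2 →
      ∀ x ∈ {x ∈ Set.Ioc (-π) π | J m x = p x},
        if x = π then
          (if m = 1 then p π = 0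
           else if m = 2 then False
           else deriv (fun y => J m y - p y) π ≠ 0)
        else deriv (fun y => J m y - p y) x ≠ 0) :=
  Jm_zero_count_and_simplicity_general k m hm J hJ1 hJrec hJmean p hparity
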